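/- Let Φ(z, θ) = (ρ(θ;z)cos θ, ρ(θ;z)sin θ) with ρ : ℝ^P × ℝ → ℝ C¹ (here z ∈ ℝ^P). Then the Jacobian J_Φ = √(det(DΦᵀ·DΦ)) of Φ : ℝ^{P+1} → ℝ² equals ρ·|∇_z ρ|, where |∇_z ρ|² = Σ_{p=1}^P (∂_{z_p} ρ)². -/

import Mathlib

/-!
The `z`-parts of the two rows of `DΦ` are `cos θ ∇_z ρ` and `sin θ ∇_z ρ`, which are parallel.
By Lagrange's identity the Gram determinant is then `|∇_z ρ|²` times the square of the
`2×2` minor `cos θ · e₂ - sin θ · e₁`, and this minor equals `ρ` because the `θ`-column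
`(e₁, e₂)` is the rotation by `θ` of `(∂_θ ρ, ρ)`.
-/

open Real

theorem gram_det_of_parallel_rows {ι : Type*} [Fintype ι] (g : ι → ℝ) (a b e₁ e₂ : ℝ) :
    ((∑ p, (g p * a) ^ 2) + e₁ ^ 2) * ((∑ p, (g p * b) ^ 2) + e₂ ^ 2) -
        ((∑ p, g p * a * (g p * b)) + e₁ * e₂) ^ 2 =
      (∑ p, g p ^ 2) * (a * e₂ - b * e₁) ^ 2 := by
  have hsum (c : ℝ) (f : ι → ℝ) (hf : ∀ p, f p = g p ^ 2 * c) :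
      ∑ p, f p = (∑ p, g p ^ 2) * c := by
    rw [Finset.sum_mul]
    exact Finset.sum_congr rfl fun p _ => hf p
  rw [hsum (a ^ 2) (fun p => (g p * a) ^ 2) fun p => by ring,
    hsum (b ^ 2) (fun p => (g p * b) ^ 2) fun p => by ring,
    hsum (a * b) (fun p => g p * a * (g p * b)) fun p => by ring]
  ring

theorem cos_mul_sub_sin_mul_rotation (θ d r : ℝ) :
    cos θ * (d * sin θ + r * cos θ) - sin θ * (d * cos θ - r * sin θ) = r := by
  linear_combination r * cos_sq_add_sin_sq θ

theorem stmt_7_general (P : ℕ) (ρ : ℝ → (Fin P → ℝ) → ℝ)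
    (hpos : ∀ θ z, 0 < ρ θ z) (θ : ℝ) (z : Fin P → ℝ)
    (gz : Fin P → ℝ)
    (pθ : ℝ)
    (row1 : Fin P → ℝ) (hrow1 : ∀ p, row1 p = gz p * Real.cos θ)
    (row2 : Fin P → ℝ) (hrow2 : ∀ p, row2 p = gz p * Real.sin θ)
    (e1 e2 : ℝ)
    (he1 : e1 = pθ * Real.cos θ - ρ θ z * Real.sin θ)
    (he2 : e2 = pθ * Real.sin θ + ρ θ z * Real.cos θ) :
    Real.sqrt (((∑ p, row1 p ^ 2) + e1 ^ 2) * ((∑ p, row2 p ^ 2) + e2 ^ 2) -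
        ((∑ p, row1 p * row2 p) + e1 * e2) ^ 2) =
      ρ θ z * Real.sqrt (∑ p, gz p ^ 2) := by
  obtain rfl : row1 = fun p => gz p * cos θ := funext hrow1
  obtain rfl : row2 = fun p => gz p * sin θ := funext hrow2
  rw [gram_det_of_parallel_rows, he1, he2, cos_mul_sub_sin_mul_rotation,
    sqrt_mul (Finset.sum_nonneg fun p _ => sq_nonneg (gz p)), sqrt_sq (hpos θ z).le, mul_comm]

/-- The coarea Jacobian of `Φ(z,θ) = (ρ(θ;z)cos θ, ρ(θ;z)sin θ)`, i.e. the square root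
of the 2×2 Gram determinant of the rows of `DΦ`, equals `ρ·|∇_z ρ|`. -/
theorem stmt_7 (P : ℕ) (ρ : ℝ → (Fin P → ℝ) → ℝ)
    (hρ : ContDiff ℝ 1 (fun p : ℝ × (Fin P → ℝ) => ρ p.1 p.2))
    (hpos : ∀ θ z, 0 < ρ θ z) (θ : ℝ) (z : Fin P → ℝ)
    (gz : Fin P → ℝ) (hgz : ∀ p, gz p = fderiv ℝ (fun z' => ρ θ z') z (Pi.single p 1))
    (pθ : ℝ) (hpθ : pθ = deriv (fun θ' => ρ θ' z) θ)
    (row1 : Fin P → ℝ) (hrow1 : ∀ p, row1 p = gz p * Real.cos θ)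
    (row2 : Fin P → ℝ) (hrow2 : ∀ p, row2 p = gz p * Real.sin θ)
    (e1 e2 : ℝ)
    (he1 : e1 = pθ * Real.cos θ - ρ θ z * Real.sin θ)
    (he2 : e2 = pθ * Real.sin θ + ρ θ z * Real.cos θ) :
    Real.sqrt (((∑ p, row1 p ^ 2) + e1 ^ 2) * ((∑ p, row2 p ^ 2) + e2 ^ 2) -
        ((∑ p, row1 p * row2 p) + e1 * e2) ^ 2) =
      ρ θ z * Real.sqrt (∑ p, gz p ^ 2) :=
  stmt_7_general P ρ hpos θ z gz pθ row1 hrow1 row2 hrow2 e1 e2 he1 he2
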